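/- Let (G, X, M, ℓ) be an instance of the annotated odd cycle transversal problem and let H be a set of vertices of G. Then there is a set of connected components of (G − X) − H whose deletion from G yields a graph G' such that (G' − X) − H has at most 2·(ℓ+1)·(|X| + |H|)² connected components and the instance (G', X, M, ℓ) is a yes-instance if and only if (G, X, M, ℓ) is a yes-instance. -/

import Mathlib

set_option maxHeartbeats 1000000

variable {V : Type}

/-- The graph obtained from `G` by deleting the vertex set `S`
(deleted vertices are kept as isolated vertices). -/
def gdelete (G : SimpleGraph V) (S : Set V) : SimpleGraph V where
  Adj u v := G.Adj u v ∧ u ∉ S ∧ v ∉ S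
  symm := by constructor; intro u v h; exact ⟨h.1.symm, h.2.2, h.2.1⟩
  loopless := by constructor; intro v h; exact h.1.ne rfl

/-- The subgraph of `G` induced by the vertex set `A`
(vertices outside `A` are kept as isolated vertices). -/
def grestrict (G : SimpleGraph V) (A : Set V) : SimpleGraph V := gdelete G Aᶜ

/-- `C` is (the vertex set of) a connected component of the induced subgraph `G[A]`:
`C ⊆ A`, `C` is nonempty and connected, and `C` is closed under adjacency within `A`. -/
def IsCompOf (G : SimpleGraph V) (A C : Set V) : Prop :=
  C ⊆ A ∧ C.Nonempty ∧ (∀ u ∈ C, ∀ v ∈ C, (grestrict G C).Reachable u v) ∧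
    ∀ u ∈ C, ∀ v ∈ A, G.Adj u v → v ∈ C

/-- `M` consists of unordered pairs of distinct vertices of `X`. -/
def PairsOver (M : Set (Sym2 V)) (X : Set V) : Prop :=
  ∀ e ∈ M, ∃ u v : V, u ∈ X ∧ v ∈ X ∧ u ≠ v ∧ e = s(u, v)

/-- `G − S` is bipartite via a proper 2-coloring that moreover assigns equal colors
to every (surviving) monochromatic pair in `M`. -/
def AnnColoring (G : SimpleGraph V) (M : Set (Sym2 V)) (S : Set V) : Prop :=
  ∃ c : V → Bool, (∀ u v : V, u ∉ S → v ∉ S → G.Adj u v → c u ≠ c v) ∧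
    ∀ u v : V, u ∉ S → v ∉ S → s(u, v) ∈ M → c u = c v

/-- The annotated odd cycle transversal instance `(G, X, M, ℓ)` is a yes-instance. -/
def AnnYes (G : SimpleGraph V) (M : Set (Sym2 V)) (ℓ : ℕ) : Prop :=
  ∃ S : Set V, S.ncard ≤ ℓ ∧ AnnColoring G M S

/-! Fix a proper 2-colouring `b` of `G − X` and put `A = (X ∪ H)ᶜ`. A component of `G[A]`
links `w, w' ∈ X ∪ H` with parity `q` if it contains neighbours `u` of `w` and `v` of `w'`
with `b u ^^ b v = q`. For each of the `2 |X ∪ H|²` patterns `(w, w', q)` keep `ℓ + 1`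
components realising it (all of them if there are fewer) and delete the rest.

Deleting vertices preserves yes-instances. Conversely, let `(S, c)` solve the reduced
instance. A pattern of a deleted component `C` is realised by a kept component that `S`
misses, on which `c = b` up to a constant; hence `c w ^^ c w' = b u ^^ b v` for all surviving
neighbours `w ∼ u`, `w' ∼ v` of `C`. So `b`, flipped by a suitable constant on `C`, extends `c`
properly, and the monochromatic pairs lie in `X`, where nothing changes. -/

section Components

variable {G : SimpleGraph V} {A B C C' S : Set V} {u v x y : V}

@[simp]
lemma grestrict_adj : (grestrict G B).Adj u v ↔ G.Adj u v ∧ u ∈ B ∧ v ∈ B := by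
  simp [grestrict, gdelete]

lemma grestrict_mono (h : B ⊆ C) : grestrict G B ≤ grestrict G C :=
  fun _ _ huv => by
    rw [grestrict_adj] at huv ⊢
    exact ⟨huv.1, h huv.2.1, h huv.2.2⟩

lemma gdelete_le : gdelete G S ≤ G := fun _ _ huv => huv.1

lemma mem_of_reachable_of_adj_closed (hcl : ∀ u ∈ C, ∀ v ∈ A, G.Adj u v → v ∈ C)
    (h : (grestrict G A).Reachable x y) (hx : x ∈ C) : y ∈ C := by
  rw [SimpleGraph.reachable_iff_reflTransGen] at h
  induction h with
  | refl => exact hx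
  | tail _ hyz ih =>
    rw [grestrict_adj] at hyz
    exact hcl _ ih _ hyz.2.2 hyz.1

def compOf (G : SimpleGraph V) (A : Set V) (x : V) : Set V :=
  {y | (grestrict G A).Reachable x y}

lemma mem_compOf_self : x ∈ compOf G A x := SimpleGraph.Reachable.refl x

lemma reachable_grestrict_compOf (h : (grestrict G A).Reachable x y) :
    (grestrict G (compOf G A x)).Reachable x y := by
  rw [SimpleGraph.reachable_iff_reflTransGen] at h ⊢
  induction h with
  | refl => rfl
  | @tail y z hxy hyz ih =>
    have hxy : y ∈ compOf G A x := (SimpleGraph.reachable_iff_reflTransGen _ _).2 hxy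
    refine ih.tail ((grestrict_adj).2 ⟨((grestrict_adj).1 hyz).1, hxy, ?_⟩)
    exact SimpleGraph.Reachable.trans hxy hyz.reachable

lemma isCompOf_compOf (hx : x ∈ A) : IsCompOf G A (compOf G A x) := by
  have hsub : compOf G A x ⊆ A := fun y hy =>
    mem_of_reachable_of_adj_closed (fun _ _ _ hv _ => hv) hy hx
  refine ⟨hsub, ⟨x, mem_compOf_self⟩, fun u hu v hv => ?_, fun u hu v hv huv => ?_⟩
  · exact (reachable_grestrict_compOf hu).symm.trans (reachable_grestrict_compOf hv)
  · exact SimpleGraph.Reachable.trans hu ((grestrict_adj).2 ⟨huv, hsub hu, hv⟩).reachable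

lemma IsCompOf.eq_compOf (hC : IsCompOf G A C) (hx : x ∈ C) : C = compOf G A x := by
  refine Set.Subset.antisymm (fun y hy => ?_) (fun y hy => ?_)
  · exact (hC.2.2.1 x hx y hy).mono (grestrict_mono hC.1)
  · exact mem_of_reachable_of_adj_closed hC.2.2.2 hy hx

lemma IsCompOf.eq (hC : IsCompOf G A C) (hC' : IsCompOf G A C') (hx : x ∈ C) (hx' : x ∈ C') :
    C = C' :=
  (hC.eq_compOf hx).trans (hC'.eq_compOf hx').symm

lemma compOf_eq_of_adj (hu : u ∈ A) (hv : v ∈ A) (huv : G.Adj u v) :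
    compOf G A u = compOf G A v :=
  (isCompOf_compOf hu).eq_compOf ((isCompOf_compOf hu).2.2.2 u mem_compOf_self v hv huv)

lemma IsCompOf.of_subset (hC : IsCompOf G A C) (hCB : C ⊆ B) (hBA : B ⊆ A) : IsCompOf G B C :=
  ⟨hCB, hC.2.1, hC.2.2.1, fun u hu v hv => hC.2.2.2 u hu v (hBA hv)⟩

lemma pairwiseDisjoint_isCompOf : {C | IsCompOf G A C}.PairwiseDisjoint id :=
  fun _ hC _ hC' hne => Set.disjoint_left.2 fun _ hx hx' => hne (hC.eq hC' hx hx')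

lemma IsCompOf.disjoint_sUnion {𝒞 : Set (Set V)} (hC : IsCompOf G A C)
    (h𝒞 : ∀ C' ∈ 𝒞, IsCompOf G A C') (hC𝒞 : C ∉ 𝒞) : Disjoint C (⋃₀ 𝒞) := by
  rw [Set.disjoint_sUnion_right]
  intro C' hC'
  exact pairwiseDisjoint_isCompOf hC (h𝒞 C' hC') fun h => hC𝒞 (h ▸ hC')

lemma isCompOf_diff_sUnion_iff {𝒞 : Set (Set V)} (h𝒞 : ∀ C' ∈ 𝒞, IsCompOf G A C') :
    IsCompOf G (A \ ⋃₀ 𝒞) C ↔ IsCompOf G A C ∧ C ∉ 𝒞 := by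
  constructor
  · intro hC
    obtain ⟨x, hx⟩ := hC.2.1
    have hxA := hC.1 hx
    have hx𝒞 : compOf G A x ∉ 𝒞 := fun h => hxA.2 ⟨_, h, mem_compOf_self⟩
    have hsub : compOf G A x ⊆ A \ ⋃₀ 𝒞 := Set.subset_sdiff.2
      ⟨(isCompOf_compOf hxA.1).1, (isCompOf_compOf hxA.1).disjoint_sUnion h𝒞 hx𝒞⟩
    have hCx := hC.eq ((isCompOf_compOf hxA.1).of_subset hsub Set.sdiff_subset) hx mem_compOf_self
    exact hCx ▸ ⟨isCompOf_compOf hxA.1, hx𝒞⟩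
  · rintro ⟨hC, hC𝒞⟩
    exact hC.of_subset (Set.subset_sdiff.2 ⟨hC.1, hC.disjoint_sUnion h𝒞 hC𝒞⟩) Set.sdiff_subset

end Components

lemma Set.PairwiseDisjoint.exists_disjoint_of_ncard_lt {α : Type*} {𝒦 : Set (Set α)}
    {S : Set α} (h𝒦 : 𝒦.PairwiseDisjoint id) (hS : S.Finite) (hlt : S.ncard < 𝒦.ncard) :
    ∃ C ∈ 𝒦, Disjoint C S := by
  by_contra! h
  have hmeet : ∀ C : 𝒦, ∃ x : S, x.1 ∈ C.1 := fun C => by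
    obtain ⟨x, hxC, hxS⟩ := Set.not_disjoint_iff.1 (h C C.2)
    exact ⟨⟨x, hxS⟩, hxC⟩
  choose f hf using hmeet
  have hinj : Function.Injective f := fun C C' hCC' =>
    Subtype.ext (h𝒦.elim C.2 C'.2 (Set.not_disjoint_iff.2 ⟨_, hf C, hCC' ▸ hf C'⟩))
  have := hS.to_subtype
  have := Nat.card_le_card_of_injective f hinj
  rw [Nat.card_coe_set_eq, Nat.card_coe_set_eq] at this
  omega

lemma Set.exists_subset_eq_or_ncard_eq {α : Type*} (R : Set α) (n : ℕ) :
    ∃ K ⊆ R, K.ncard ≤ n ∧ (K = R ∨ K.ncard = n) := by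
  by_cases h : R.ncard ≤ n
  · exact ⟨R, subset_rfl, h, .inl rfl⟩
  · obtain ⟨K, hKR, hK⟩ := Set.exists_subset_card_eq (s := R) (n := n) (by omega)
    exact ⟨K, hKR, hK.le, .inr hK⟩

lemma xor_eq_xor_of_reachable {G : SimpleGraph V} {f g : V → Bool}
    (hf : ∀ u v, G.Adj u v → f u ≠ f v) (hg : ∀ u v, G.Adj u v → g u ≠ g v) {u v : V}
    (h : G.Reachable u v) : xor (f u) (f v) = xor (g u) (g v) := by
  obtain ⟨p⟩ := h
  have hfp : Even p.length ↔ (f u ↔ f v) :=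
    (SimpleGraph.Coloring.mk f (hf _ _)).even_length_iff_congr p
  have hgp : Even p.length ↔ (g u ↔ g v) :=
    (SimpleGraph.Coloring.mk g (hg _ _)).even_length_iff_congr p
  have hpar := hfp.symm.trans hgp
  revert hpar
  cases f u <;> cases f v <;> cases g u <;> cases g v <;> simp

lemma exists_forall_ne_xor {α β : Type*} {R : α → β → Prop} {a : α → Bool} {b : β → Bool}
    (h : ∀ w u w' v, R w u → R w' v → xor (a w) (a w') = xor (b u) (b v)) :
    ∃ e, ∀ w u, R w u → a w ≠ xor (b u) e := by
  by_cases h₀ : ∃ w u, R w u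
  · obtain ⟨w₀, u₀, h₀⟩ := h₀
    refine ⟨!xor (a w₀) (b u₀), fun w u hwu => ?_⟩
    have := h w u w₀ u₀ hwu h₀
    revert this
    cases a w <;> cases a w₀ <;> cases b u <;> cases b u₀ <;> simp
  · push Not at h₀
    exact ⟨true, fun w u hwu => absurd hwu (h₀ w u)⟩

lemma PairsOver.mono {M : Set (Sym2 V)} {X Y : Set V} (hM : PairsOver M X) (hXY : X ⊆ Y) :
    PairsOver M Y := fun e he => by
  obtain ⟨u, v, hu, hv, huv, rfl⟩ := hM e he
  exact ⟨u, v, hXY hu, hXY hv, huv, rfl⟩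

lemma PairsOver.left_mem {M : Set (Sym2 V)} {X : Set V} (hM : PairsOver M X) {u v : V}
    (h : s(u, v) ∈ M) : u ∈ X := by
  obtain ⟨p, q, hp, hq, -, he⟩ := hM _ h
  rcases Sym2.eq_iff.1 he with ⟨rfl, -⟩ | ⟨rfl, -⟩
  · exact hp
  · exact hq

lemma AnnYes.mono {G G' : SimpleGraph V} {M : Set (Sym2 V)} {ℓ : ℕ} (hG : G' ≤ G)
    (h : AnnYes G M ℓ) : AnnYes G' M ℓ := by
  obtain ⟨S, hS, c, hc, hcM⟩ := h
  exact ⟨S, hS, c, fun u v hu hv huv => hc u v hu hv (hG huv), hcM⟩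

lemma annColoring_piecewise {G : SimpleGraph V} {M : Set (Sym2 V)} {S U : Set V}
    {c b e : V → Bool} (hc : ∀ u v, u ∉ S → v ∉ S → (gdelete G U).Adj u v → c u ≠ c v)
    (hcM : ∀ u v, u ∉ S → v ∉ S → s(u, v) ∈ M → c u = c v)
    (hMU : ∀ u v, s(u, v) ∈ M → u ∉ U)
    (hb : ∀ u v, u ∈ U → v ∈ U → G.Adj u v → b u ≠ b v)
    (he : ∀ u v, u ∈ U → v ∈ U → G.Adj u v → e u = e v)
    (hflip : ∀ w u, w ∉ S → w ∉ U → u ∈ U → G.Adj w u → c w ≠ xor (b u) (e u)) :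
    AnnColoring G M (S \ U) := by
  classical
  have hS : ∀ {x}, x ∉ S \ U → x ∉ U → x ∉ S := fun hx hxU hxS => hx ⟨hxS, hxU⟩
  refine ⟨U.piecewise (fun x => xor (b x) (e x)) c, fun u v hu hv huv => ?_,
    fun u v hu hv huv => ?_⟩
  · by_cases huU : u ∈ U <;> by_cases hvU : v ∈ U <;>
      simp only [Set.piecewise_eq_of_mem, Set.piecewise_eq_of_notMem, huU, hvU,
        not_false_eq_true]
    · rw [he u v huU hvU huv, Ne, Bool.xor_left_inj]
      exact hb u v huU hvU huv
    · exact (hflip v u (hS hv hvU) hvU huU huv.symm).symm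
    · exact hflip u v (hS hu huU) huU hvU huv
    · exact hc u v (hS hu huU) (hS hv hvU) ⟨huv, huU, hvU⟩
  · have huU := hMU u v huv
    have hvU := hMU v u (Sym2.eq_swap ▸ huv)
    rw [Set.piecewise_eq_of_notMem _ _ _ huU, Set.piecewise_eq_of_notMem _ _ _ hvU]
    exact hcM u v (hS hu huU) (hS hv hvU) huv

def LinksWithParity (G : SimpleGraph V) (b : V → Bool) (w w' : V) (q : Bool) (C : Set V) :
    Prop :=
  ∃ u ∈ C, ∃ v ∈ C, G.Adj w u ∧ G.Adj w' v ∧ xor (b u) (b v) = q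

/-- The components in `𝒞` are deletable: every linking pattern of one of them is realised by
`ℓ + 1` components outside `𝒞`, so a deletion set of size `ℓ` misses at least one of those. -/
def IsRedundant (G : SimpleGraph V) (A : Set V) (b : V → Bool) (ℓ : ℕ) (𝒞 : Set (Set V)) :
    Prop :=
  ∀ C ∈ 𝒞, IsCompOf G A C ∧ ∀ w w' q, w ∉ A → w' ∉ A → LinksWithParity G b w w' q C →
    ℓ + 1 ≤ {C' | IsCompOf G A C' ∧ C' ∉ 𝒞 ∧ LinksWithParity G b w w' q C'}.ncard

section Redundant

variable [Finite V] {G : SimpleGraph V} {A : Set V} {b : V → Bool} {ℓ : ℕ}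
  {𝒞 : Set (Set V)}

/-- Some kept component `C'` with the same linking pattern avoids `S`; on the connected
set `C'` the colourings `c` and `b` differ by a constant, which transfers the parity. -/
lemma IsRedundant.xor_eq (h𝒞 : IsRedundant G A b ℓ 𝒞)
    (hb : ∀ u v, u ∈ A → v ∈ A → G.Adj u v → b u ≠ b v) {S : Set V} {c : V → Bool}
    (hS : S.ncard ≤ ℓ) (hc : ∀ u v, u ∉ S → v ∉ S → (gdelete G (⋃₀ 𝒞)).Adj u v → c u ≠ c v)
    {C : Set V} (hC : C ∈ 𝒞) {w w' u v : V} (hw : w ∉ S ∪ ⋃₀ 𝒞) (hw' : w' ∉ S ∪ ⋃₀ 𝒞)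
    (hu : u ∈ C) (hv : v ∈ C) (hwu : G.Adj w u) (hw'v : G.Adj w' v) :
    xor (c w) (c w') = xor (b u) (b v) := by
  rw [Set.mem_union, not_or] at hw hw'
  have hcomps : ∀ C ∈ 𝒞, IsCompOf G A C := fun C hC => (h𝒞 C hC).1
  have hnotA : ∀ {x y}, x ∉ ⋃₀ 𝒞 → y ∈ C → G.Adj x y → x ∉ A := fun hx hy hxy hxA =>
    hx ⟨C, hC, (hcomps C hC).2.2.2 _ hy _ hxA hxy.symm⟩
  obtain ⟨C', ⟨hC'comp, hC'𝒞, u', hu', v', hv', hwu', hw'v', hq⟩, hC'S⟩ :=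
    (pairwiseDisjoint_isCompOf.subset fun _ h => h.1).exists_disjoint_of_ncard_lt
      S.toFinite (hS.trans_lt ((h𝒞 C hC).2 w w' _ (hnotA hw.2 hu hwu) (hnotA hw'.2 hv hw'v)
        ⟨u, hu, v, hv, hwu, hw'v, rfl⟩))
  have hC'U := hC'comp.disjoint_sUnion hcomps hC'𝒞
  have hsurv : ∀ {x}, x ∈ C' → x ∉ S ∧ x ∉ ⋃₀ 𝒞 := fun hx =>
    ⟨Set.disjoint_left.1 hC'S hx, Set.disjoint_left.1 hC'U hx⟩
  have hpar : xor (c u') (c v') = xor (b u') (b v') := by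
    refine xor_eq_xor_of_reachable (fun x y hxy => ?_) (fun x y hxy => ?_)
      (hC'comp.2.2.1 u' hu' v' hv')
    · rw [grestrict_adj] at hxy
      exact hc x y (hsurv hxy.2.1).1 (hsurv hxy.2.2).1
        ⟨hxy.1, (hsurv hxy.2.1).2, (hsurv hxy.2.2).2⟩
    · rw [grestrict_adj] at hxy
      exact hb x y (hC'comp.1 hxy.2.1) (hC'comp.1 hxy.2.2) hxy.1
  have hwu'c : c w ≠ c u' := hc w u' hw.1 (hsurv hu').1 ⟨hwu', hw.2, (hsurv hu').2⟩
  have hw'v'c : c w' ≠ c v' := hc w' v' hw'.1 (hsurv hv').1 ⟨hw'v', hw'.2, (hsurv hv').2⟩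
  rw [Bool.eq_not_of_ne hwu'c, Bool.eq_not_of_ne hw'v'c, Bool.not_xor_not, hpar, hq]

theorem annYes_of_isRedundant {M : Set (Sym2 V)}
    (hb : ∀ u v, u ∈ A → v ∈ A → G.Adj u v → b u ≠ b v) (hM : PairsOver M Aᶜ)
    (h𝒞 : IsRedundant G A b ℓ 𝒞) (h : AnnYes (gdelete G (⋃₀ 𝒞)) M ℓ) : AnnYes G M ℓ := by
  obtain ⟨S, hS, c, hc, hcM⟩ := h
  have hflip : ∀ C, ∃ ε, C ∈ 𝒞 →
      ∀ w u, w ∉ S ∪ ⋃₀ 𝒞 → u ∈ C → G.Adj w u → c w ≠ xor (b u) ε := fun C => by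
    by_cases hC : C ∈ 𝒞
    · obtain ⟨ε, hε⟩ := exists_forall_ne_xor (R := fun w u => w ∉ S ∪ ⋃₀ 𝒞 ∧ u ∈ C ∧ G.Adj w u)
        (a := c) (b := b) fun w u w' v ⟨hw, hu, hwu⟩ ⟨hw', hv, hw'v⟩ =>
          h𝒞.xor_eq hb hS hc hC hw hw' hu hv hwu hw'v
      exact ⟨ε, fun _ w u hw hu hwu => hε w u ⟨hw, hu, hwu⟩⟩
    · exact ⟨true, fun h => absurd h hC⟩
  choose ε hε using hflip
  have hUA : ⋃₀ 𝒞 ⊆ A := Set.sUnion_subset fun C hC => (h𝒞 C hC).1.1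
  have hcomp : ∀ {x}, x ∈ ⋃₀ 𝒞 → compOf G A x ∈ 𝒞 := fun ⟨C, hC, hx⟩ =>
    (h𝒞 C hC).1.eq_compOf hx ▸ hC
  refine ⟨S \ ⋃₀ 𝒞, (Set.ncard_le_ncard Set.sdiff_subset).trans hS,
    annColoring_piecewise (e := fun x => ε (compOf G A x)) hc hcM
      (fun u v huv huU => hM.left_mem huv (hUA huU))
      (fun u v hu hv => hb u v (hUA hu) (hUA hv))
      (fun u v hu hv huv => congrArg ε (compOf_eq_of_adj (hUA hu) (hUA hv) huv))
      (fun w u hw hwU hu hwu => hε _ (hcomp hu) w u (by simp [hw, hwU]) mem_compOf_self hwu)⟩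

theorem exists_isRedundant (G : SimpleGraph V) (A : Set V) (b : V → Bool) (ℓ : ℕ) :
    ∃ 𝒞, IsRedundant G A b ℓ 𝒞 ∧
      ({C | IsCompOf G A C} \ 𝒞).ncard ≤ 2 * (ℓ + 1) * Aᶜ.ncard ^ 2 := by
  classical
  choose K hKsub hKcard hKfull using fun w w' q =>
    Set.exists_subset_eq_or_ncard_eq {C | IsCompOf G A C ∧ LinksWithParity G b w w' q C} (ℓ + 1)
  set F : Finset (V × V × Bool) :=
    Aᶜ.toFinite.toFinset ×ˢ Aᶜ.toFinite.toFinset ×ˢ Finset.univ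
  set 𝒦 := ⋃ t ∈ F, K t.1 t.2.1 t.2.2
  refine ⟨{C | IsCompOf G A C} \ 𝒦, fun C hC => ⟨hC.1, fun w w' q hw hw' hlink => ?_⟩, ?_⟩
  · have hCK : C ∉ K w w' q := fun h =>
      hC.2 (Set.mem_biUnion (x := (w, w', q)) (by simp [F, hw, hw']) h)
    have hfull : (K w w' q).ncard = ℓ + 1 :=
      (hKfull w w' q).resolve_left fun h => hCK (h ▸ ⟨hC.1, hlink⟩)
    refine hfull.ge.trans (Set.ncard_le_ncard (fun C' hC' => ?_))
    have hC'K : C' ∈ 𝒦 := Set.mem_biUnion (x := (w, w', q)) (by simp [F, hw, hw']) hC'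
    exact ⟨(hKsub w w' q hC').1, fun h => h.2 hC'K, (hKsub w w' q hC').2⟩
  · calc ({C | IsCompOf G A C} \ ({C | IsCompOf G A C} \ 𝒦)).ncard
        ≤ 𝒦.ncard := Set.ncard_le_ncard fun C hC => by_contra fun h => hC.2 ⟨hC.1, h⟩
      _ ≤ ∑ t ∈ F, (K t.1 t.2.1 t.2.2).ncard := F.set_ncard_biUnion_le _
      _ ≤ ∑ _t ∈ F, (ℓ + 1) := Finset.sum_le_sum fun t _ => hKcard _ _ _
      _ = 2 * (ℓ + 1) * Aᶜ.ncard ^ 2 := by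
        rw [Finset.sum_const, smul_eq_mul, Finset.card_product, Finset.card_product,
          Finset.card_univ, Fintype.card_bool, ← Set.ncard_eq_toFinset_card]
        ring

end Redundant

/-- bounding the number of components: for an annotated instance
`(G, X, M, ℓ)` and a vertex set `H`, one can delete a set of connected components of
`(G − X) − H` from `G`, obtaining `G'`, so that `(G' − X) − H` has at most
`2(ℓ+1)(|X| + |H|)²` connected components and `(G', X, M, ℓ)` is a yes-instance iff
`(G, X, M, ℓ)` is. -/
theorem stmt4 [Fintype V] (G : SimpleGraph V) (X : Set V) (M : Set (Sym2 V)) (ℓ : ℕ)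
    (hbip : (gdelete G X).Colorable 2) (hM : PairsOver M X) (H : Set V) :
    ∃ 𝒞 : Set (Set V), (∀ C ∈ 𝒞, IsCompOf G (Xᶜ ∩ Hᶜ) C) ∧
      {C : Set V | IsCompOf G ((X ∪ H ∪ ⋃₀ 𝒞)ᶜ) C}.ncard ≤
        2 * (ℓ + 1) * (X.ncard + H.ncard) ^ 2 ∧
      (AnnYes (gdelete G (⋃₀ 𝒞)) M ℓ ↔ AnnYes G M ℓ) := by
  set A := Xᶜ ∩ Hᶜ
  have hAc : Aᶜ = X ∪ H := by simp [A, Set.compl_inter]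
  let b := hbip.toColoring (by simp : 2 ≤ Fintype.card Bool)
  have hb : ∀ u v, u ∈ A → v ∈ A → G.Adj u v → b u ≠ b v := fun u v hu hv huv =>
    b.valid ⟨huv, hu.1, hv.1⟩
  obtain ⟨𝒞, h𝒞, hcard⟩ := exists_isRedundant G A b ℓ
  have hcomps : ∀ C ∈ 𝒞, IsCompOf G A C := fun C hC => (h𝒞 C hC).1
  refine ⟨𝒞, hcomps, ?_, annYes_of_isRedundant hb (hM.mono (hAc ▸ Set.subset_union_left)) h𝒞,
    AnnYes.mono gdelete_le⟩
  have hrest : (X ∪ H ∪ ⋃₀ 𝒞)ᶜ = A \ ⋃₀ 𝒞 := by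
    rw [Set.compl_union, Set.compl_union, Set.sdiff_eq]
  simp_rw [hrest, isCompOf_diff_sUnion_iff hcomps]
  calc _ ≤ 2 * (ℓ + 1) * Aᶜ.ncard ^ 2 := hcard
    _ ≤ 2 * (ℓ + 1) * (X.ncard + H.ncard) ^ 2 := by
      rw [hAc]
      gcongr
      exact Set.ncard_union_le X H
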